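/- Let m ≥ 1, let χ be a primitive even character mod u^{m+1}, and let ψ = ψ_χ. Let ψ̄ = ψ_{χ̄} be the function associated to the complex-conjugate character χ̄ (which is also primitive and even). Then for every s ∈ ℂ, the functional equation L(s, ψ) = ε_ψ · q^{(m−1)(1/2−s)} · L(1−s, ψ̄) holds, where q^z denotes exp(z·log q) for z ∈ ℂ. -/

import Mathlib

open Polynomial

open Classical in
/-- Evaluate a character of the unit group on a ring element: `χ x` if `x` is a unit, else `0`. -/
noncomputable def charVal {R : Type*} [Monoid R] (χ : Rˣ →* ℂˣ) (x : R) : ℂ :=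
  if h : IsUnit x then ((χ h.unit : ℂˣ) : ℂ) else 0

/-- The quotient ring `𝔽_q[u]/(u^{m+1})`. -/
abbrev ModRing (Fq : Type) [Field Fq] (m : ℕ) : Type :=
  Fq[X] ⧸ Ideal.span {(X : Fq[X]) ^ (m + 1)}

/-- A character mod `u^{m+1}` is primitive and even if it is trivial on the nonzero constants
and nontrivial on the residues of elements `1 + a·u^m`. -/
def IsPrimitiveEven (Fq : Type) [Field Fq] (m : ℕ) (χ : (ModRing Fq m)ˣ →* ℂˣ) : Prop :=
  (∀ a : Fq, a ≠ 0 →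
      charVal χ (Ideal.Quotient.mk (Ideal.span {(X : Fq[X]) ^ (m + 1)}) (C a)) = 1) ∧
  (∃ a : Fq,
      charVal χ (Ideal.Quotient.mk (Ideal.span {(X : Fq[X]) ^ (m + 1)}) (1 + C a * X ^ m)) ≠ 1)

/-- `ψ_χ(f) = χ(rev f mod u^{m+1})` where `rev f = u^{deg f}·f(1/u)`. -/
noncomputable def psiChar {Fq : Type} [Field Fq] (m : ℕ) (χ : (ModRing Fq m)ˣ →* ℂˣ)
    (f : Fq[X]) : ℂ :=
  charVal χ (Ideal.Quotient.mk (Ideal.span {(X : Fq[X]) ^ (m + 1)}) f.reverse)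

/-- `c_d(ψ_χ)`: the sum of `ψ_χ` over monic polynomials of degree `d`. -/
noncomputable def psiCoeff {Fq : Type} [Field Fq] (m : ℕ) (χ : (ModRing Fq m)ˣ →* ℂˣ)
    (d : ℕ) : ℂ :=
  ∑ᶠ f ∈ {f : Fq[X] | f.Monic ∧ f.natDegree = d}, psiChar m χ f

/-- `L(s, ψ_χ) = Σ_{d=0}^{m-1} c_d(ψ_χ)·q^{-ds}`. -/
noncomputable def Lpsi {Fq : Type} [Field Fq] [Fintype Fq] (m : ℕ)
    (χ : (ModRing Fq m)ˣ →* ℂˣ) (s : ℂ) : ℂ :=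
  ∑ d ∈ Finset.range m, psiCoeff m χ d * (Fintype.card Fq : ℂ) ^ (-(d : ℂ) * s)

/-- The root number `ε_{ψ_χ} = q^{-(m-1)/2}·c_{m-1}(ψ_χ)`. -/
noncomputable def epsPsi {Fq : Type} [Field Fq] [Fintype Fq] (m : ℕ)
    (χ : (ModRing Fq m)ˣ →* ℂˣ) : ℂ :=
  (Fintype.card Fq : ℂ) ^ (-(((m : ℂ) - 1) / 2)) * psiCoeff m χ (m - 1)

/-- The complex-conjugate character `χ̄` of `χ`. -/
noncomputable def conjChar {Fq : Type} [Field Fq] {m : ℕ}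
    (χ : (ModRing Fq m)ˣ →* ℂˣ) : (ModRing Fq m)ˣ →* ℂˣ :=
  (Units.map (starRingEnd ℂ).toMonoidHom).comp χ

/-!
Write `S_k(χ) = ∑_b χ(1 + b₁u + ⋯ + b_k u^k)` over `b ∈ 𝔽_q^k`. Reversal identifies the monic
polynomials of degree `d` with the `1 + b₁u + ⋯ + b_d u^d`, so `c_d(ψ_χ) = S_d(χ)`, and for
`m = n + 1` the functional equation amounts to `S_n(χ) S_e(χ̄) = q^e S_{n-e}(χ)` for `e ≤ n`.

On the elements `1 + a u^{n+1}`, `χ` is a nontrivial additive character `λ` of `𝔽_q`, and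
`χ(x) = χ(x mod u^{n+1}) λ(x_{n+1})` for every `x` with constant term `1`. Multiplying by such a
`y` and truncating mod `u^{n+1}` permutes the `1 + b₁u + ⋯ + b_n u^n`, hence
`χ̄(y) S_n(χ) = ∑_b χ(b) λ(-(b y)_{n+1})`. Summing over `y = 1 + w₁u + ⋯ + w_e u^e`, the
coefficient `(b y)_{n+1}` is linear in `w`, and orthogonality of `λ` leaves `q^e` times the sum
over the `b` with `b_{n-e+1} = ⋯ = b_n = 0`, which is `q^e S_{n-e}(χ)`.
-/

instance (Fq : Type) [Field Fq] [Finite Fq] (m : ℕ) : Finite (ModRing Fq m) :=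
  have : Module.Finite Fq (AdjoinRoot ((X : Fq[X]) ^ (m + 1))) :=
    (AdjoinRoot.powerBasis (pow_ne_zero _ X_ne_zero)).finite
  Module.finite_of_finite Fq (M := AdjoinRoot ((X : Fq[X]) ^ (m + 1)))

section CharVal

variable {R : Type*}

theorem charVal_one [Monoid R] (χ : Rˣ →* ℂˣ) : charVal χ 1 = 1 := by
  simp [charVal]

theorem charVal_ne_zero [Monoid R] (χ : Rˣ →* ℂˣ) {x : R} (hx : IsUnit x) : charVal χ x ≠ 0 := by
  simp [charVal, hx]

theorem charVal_mul [CommMonoid R] (χ : Rˣ →* ℂˣ) (x y : R) :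
    charVal χ (x * y) = charVal χ x * charVal χ y := by
  by_cases hxy : IsUnit (x * y)
  · obtain ⟨hx, hy⟩ := IsUnit.mul_iff.mp hxy
    have : hxy.unit = hx.unit * hy.unit := Units.ext rfl
    simp only [charVal, dif_pos hxy, dif_pos hx, dif_pos hy, this, map_mul, Units.val_mul]
  · rw [IsUnit.mul_iff, not_and_or] at hxy
    rcases hxy with h | h <;> simp [charVal, h, IsUnit.mul_iff]

theorem charVal_map_conj [Monoid R] [Finite Rˣ] (χ : Rˣ →* ℂˣ) (x : R) :
    charVal ((Units.map (starRingEnd ℂ).toMonoidHom).comp χ) x = (charVal χ x)⁻¹ := by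
  by_cases hx : IsUnit x
  · simp only [charVal, dif_pos hx]
    -- the values of `χ` are roots of unity, hence of norm one
    obtain ⟨N, hN, hpow⟩ :=
      isOfFinOrder_iff_pow_eq_one.mp (χ.isOfFinOrder (isOfFinOrder_of_finite hx.unit))
    rw [Units.ext_iff, Units.val_pow_eq_pow_val] at hpow
    exact (Complex.inv_eq_conj (Complex.norm_eq_one_of_pow_eq_one hpow hN.ne')).symm
  · simp [charVal, hx]

end CharVal

theorem AddChar.sum_apply_sum_mul {F R ι : Type*} [Field F] [Fintype F] [DecidableEq F]
    [CommRing R] [IsDomain R] [Fintype ι] [DecidableEq ι] {ψ : AddChar F R} (hψ : ψ ≠ 1)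
    (β : ι → F) :
    ∑ w : ι → F, ψ (∑ j, w j * β j) =
      if β = 0 then (Fintype.card F : R) ^ Fintype.card ι else 0 := by
  have hsum (w : ι → F) : ψ (∑ j, w j * β j) = ∏ j, ψ (w j * β j) :=
    map_prod ψ.toMonoidHom (fun j => Multiplicative.ofAdd (w j * β j)) Finset.univ
  simp_rw [hsum]
  rw [← Fintype.prod_sum (fun j (t : F) => ψ (t * β j))]
  simp only [AddChar.sum_mulShift _ (AddChar.IsPrimitive.of_ne_one hψ), Nat.cast_ite,
    Nat.cast_zero, Finset.prod_ite_zero, Finset.prod_const, Finset.card_univ, funext_iff,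
    Pi.zero_apply, Finset.mem_univ, true_implies]

section OneAddPoly

variable {R : Type*}

noncomputable def oneAddPoly [Semiring R] (k : ℕ) (b : Fin k → R) : R[X] :=
  1 + ∑ j : Fin k, C (b j) * X ^ ((j : ℕ) + 1)

variable [Semiring R]

@[simp]
theorem coeff_oneAddPoly_zero (k : ℕ) (b : Fin k → R) : (oneAddPoly k b).coeff 0 = 1 := by
  simp [oneAddPoly, coeff_X_pow]

theorem coeff_oneAddPoly_succ (k : ℕ) (b : Fin k → R) (i : ℕ) :
    (oneAddPoly k b).coeff (i + 1) = if h : i < k then b ⟨i, h⟩ else 0 := by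
  simp only [oneAddPoly, coeff_add, coeff_one, finsetSum_coeff, coeff_C_mul, coeff_X_pow,
    add_left_inj, Nat.add_one_ne_zero, if_false, zero_add, mul_ite, mul_one, mul_zero]
  split_ifs with h
  · rw [Finset.sum_eq_single ⟨i, h⟩ (fun j _ hj => if_neg fun hij => hj (Fin.ext hij.symm))
      (by simp)]
    simp
  · exact Finset.sum_eq_zero fun j _ => if_neg (by omega)

theorem coeff_oneAddPoly_of_lt {k i : ℕ} (b : Fin k → R) (hi : k < i) :
    (oneAddPoly k b).coeff i = 0 := by
  obtain ⟨i, rfl⟩ := Nat.exists_eq_add_of_lt hi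
  rw [coeff_oneAddPoly_succ, dif_neg (by omega)]

theorem oneAddPoly_append (d e : ℕ) (b : Fin d → R) (c : Fin e → R) :
    oneAddPoly (d + e) (Fin.append b c) =
      oneAddPoly d b + ∑ j : Fin e, C (c j) * X ^ (d + (j : ℕ) + 1) := by
  simp [oneAddPoly, Fin.sum_univ_add, add_assoc]

theorem oneAddPoly_append_zero (d e : ℕ) (b : Fin d → R) :
    oneAddPoly (d + e) (Fin.append b 0) = oneAddPoly d b := by
  simp [oneAddPoly_append]

theorem coeff_oneAddPoly_append (d e : ℕ) (b : Fin d → R) (c : Fin e → R) (j : Fin e) :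
    (oneAddPoly (d + e) (Fin.append b c)).coeff (d + e - j) = c j.rev := by
  have h : d + e - j = d + (e - 1 - j) + 1 := by omega
  rw [h, coeff_oneAddPoly_succ, dif_pos (by omega)]
  convert Fin.append_right b c j.rev using 2
  ext
  simp only [Fin.val_natAdd, Fin.val_rev]
  omega

theorem injective_reflect_oneAddPoly (d : ℕ) :
    Function.Injective fun b : Fin d → R => (oneAddPoly d b).reflect d := by
  intro b b' h
  funext j
  have := congrArg (fun p => (reflect d p).coeff (j + 1)) h
  simpa [coeff_oneAddPoly_succ] using this

section Monic

variable [Nontrivial R] (d : ℕ)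

theorem natDegree_reflect_oneAddPoly (b : Fin d → R) :
    ((oneAddPoly d b).reflect d).natDegree = d := by
  refine natDegree_eq_of_le_of_coeff_ne_zero (natDegree_le_iff_coeff_eq_zero.mpr fun i hi => ?_) ?_
  · rw [coeff_reflect, revAt_eq_self_of_lt (by exact_mod_cast hi)]
    exact coeff_oneAddPoly_of_lt b (by exact_mod_cast hi)
  · simp [coeff_reflect]

theorem monic_reflect_oneAddPoly (b : Fin d → R) : ((oneAddPoly d b).reflect d).Monic := by
  simp [Monic, leadingCoeff, natDegree_reflect_oneAddPoly, coeff_reflect]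

theorem reverse_reflect_oneAddPoly (b : Fin d → R) :
    ((oneAddPoly d b).reflect d).reverse = oneAddPoly d b := by
  rw [reverse, natDegree_reflect_oneAddPoly, reflect_reflect]

theorem setOf_monic_natDegree_eq :
    {f : R[X] | f.Monic ∧ f.natDegree = d} = Set.range fun b => (oneAddPoly d b).reflect d := by
  ext f
  constructor
  · rintro ⟨hf, rfl⟩
    refine ⟨fun j => f.reverse.coeff (j + 1), ?_⟩
    suffices h : oneAddPoly f.natDegree (fun j => f.reverse.coeff (j + 1)) = f.reverse by
      dsimp only
      rw [h, reverse, reflect_reflect]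
    ext (_ | i)
    · simp [hf.leadingCoeff]
    · rw [coeff_oneAddPoly_succ]
      split_ifs with hi
      · rfl
      · exact (coeff_eq_zero_of_natDegree_lt ((reverse_natDegree_le f).trans_lt (by omega))).symm
  · rintro ⟨b, rfl⟩
    exact ⟨monic_reflect_oneAddPoly d b, natDegree_reflect_oneAddPoly d b⟩

end Monic

end OneAddPoly

theorem coeff_oneAddPoly_mul_oneAddPoly {R : Type*} [CommSemiring R] {n e : ℕ} (he : e ≤ n + 1)
    (b : Fin n → R) (w : Fin e → R) :
    (oneAddPoly n b * oneAddPoly e w).coeff (n + 1) =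
      ∑ j : Fin e, w j * (oneAddPoly n b).coeff (n - j) := by
  rw [show oneAddPoly e w = 1 + ∑ j : Fin e, C (w j) * X ^ ((j : ℕ) + 1) from rfl, mul_add,
    mul_one, coeff_add, coeff_oneAddPoly_of_lt b n.lt_succ_self, zero_add, Finset.mul_sum,
    finsetSum_coeff]
  refine Finset.sum_congr rfl fun j _ => ?_
  rw [mul_left_comm, coeff_C_mul, coeff_mul_X_pow', if_pos (by omega)]
  congr 2
  omega

theorem bijective_coeff_oneAddPoly_mul {F : Type*} [Field F] [Finite F] (n : ℕ) {y : F[X]}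
    (hy : y.coeff 0 ≠ 0) :
    Function.Bijective fun (b : Fin n → F) (j : Fin n) => (oneAddPoly n b * y).coeff (j + 1) := by
  refine Finite.injective_iff_bijective.mp fun b b' h => ?_
  have hdvd : X ^ (n + 1) ∣ (oneAddPoly n b - oneAddPoly n b') * y := by
    rw [X_pow_dvd_iff]
    rintro (_ | i) hi
    · simp [sub_mul]
    · simpa [sub_mul, sub_eq_zero] using congrFun h ⟨i, by omega⟩
  have hdvd' := prime_X.pow_dvd_of_dvd_mul_right _ (by rwa [X_dvd_iff]) hdvd
  funext j
  simpa [coeff_oneAddPoly_succ, sub_eq_zero] using X_pow_dvd_iff.mp hdvd' (j + 1) (by omega)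

section PolyChar

variable {Fq : Type} [Field Fq] {m : ℕ}

theorem isUnit_mk_of_coeff_zero_eq_one {p : Fq[X]} (hp : p.coeff 0 = 1) :
    IsUnit (Ideal.Quotient.mk (Ideal.span {(X : Fq[X]) ^ (m + 1)}) p) := by
  have hX : X ∣ p - 1 := by simp [X_dvd_iff, hp]
  rw [← add_sub_cancel (1 : Fq[X]) p, map_add, map_one]
  refine IsNilpotent.isUnit_one_add ⟨m + 1, ?_⟩
  rw [← map_pow, Ideal.Quotient.eq_zero_iff_mem, Ideal.mem_span_singleton]
  exact pow_dvd_pow_of_dvd hX _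

noncomputable def polyChar (χ : (ModRing Fq m)ˣ →* ℂˣ) (p : Fq[X]) : ℂ :=
  charVal χ (Ideal.Quotient.mk _ p)

variable (χ : (ModRing Fq m)ˣ →* ℂˣ)

@[simp]
theorem polyChar_one : polyChar χ 1 = 1 := by
  rw [polyChar, map_one, charVal_one]

theorem polyChar_mul (p p' : Fq[X]) : polyChar χ (p * p') = polyChar χ p * polyChar χ p' := by
  rw [polyChar, map_mul, charVal_mul]
  rfl

theorem polyChar_ne_zero {p : Fq[X]} (hp : p.coeff 0 = 1) : polyChar χ p ≠ 0 :=
  charVal_ne_zero χ (isUnit_mk_of_coeff_zero_eq_one hp)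

theorem polyChar_congr {p p' : Fq[X]} (h : ∀ k ≤ m, p.coeff k = p'.coeff k) :
    polyChar χ p = polyChar χ p' := by
  rw [polyChar, polyChar, (Ideal.Quotient.mk_eq_mk_iff_sub_mem p p').mpr]
  rw [Ideal.mem_span_singleton, X_pow_dvd_iff]
  intro k hk
  rw [coeff_sub, h k (by omega), sub_self]

theorem polyChar_conjChar [Finite Fq] (p : Fq[X]) :
    polyChar (conjChar χ) p = (polyChar χ p)⁻¹ :=
  charVal_map_conj χ _

noncomputable def charSum [Fintype Fq] (k : ℕ) : ℂ :=
  ∑ b : Fin k → Fq, polyChar χ (oneAddPoly k b)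

theorem psiCoeff_eq_charSum [Fintype Fq] (d : ℕ) : psiCoeff m χ d = charSum χ d := by
  rw [psiCoeff, setOf_monic_natDegree_eq, finsum_mem_range (injective_reflect_oneAddPoly d),
    finsum_eq_sum_of_fintype, charSum]
  simp only [psiChar, reverse_reflect_oneAddPoly]
  rfl

end PolyChar

section TopChar

variable {Fq : Type} [Field Fq] {n : ℕ} (χ : (ModRing Fq (n + 1))ˣ →* ℂˣ)

noncomputable def topChar : AddChar Fq ℂ where
  toFun a := polyChar χ (1 + C a * X ^ (n + 1))
  map_zero_eq_one' := by simp
  map_add_eq_mul' a b := by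
    rw [← polyChar_mul]
    refine polyChar_congr χ fun k hk => ?_
    have : (1 + C a * X ^ (n + 1)) * (1 + C b * X ^ (n + 1)) =
        1 + C (a + b) * X ^ (n + 1) + C (a * b) * X ^ (n + 1 + (n + 1)) := by
      simp only [map_add, map_mul, pow_add]
      ring
    rw [this, coeff_add (p := 1 + _), coeff_C_mul_X_pow, if_neg (by omega), add_zero]

theorem topChar_apply (a : Fq) : topChar χ a = polyChar χ (1 + C a * X ^ (n + 1)) := rfl

theorem topChar_ne_one (hχ : IsPrimitiveEven Fq (n + 1) χ) : topChar χ ≠ 1 := by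
  obtain ⟨a, ha⟩ := hχ.2
  exact fun h => ha (DFunLike.congr_fun h a)

theorem polyChar_eq_mul_topChar {p : Fq[X]} (hp : p.coeff 0 = 1) :
    polyChar χ p =
      polyChar χ (oneAddPoly n fun j => p.coeff (j + 1)) * topChar χ (p.coeff (n + 1)) := by
  rw [topChar_apply, ← polyChar_mul]
  refine polyChar_congr χ fun k hk => ?_
  rw [mul_add, mul_one, mul_left_comm, coeff_add, coeff_C_mul, coeff_mul_X_pow']
  rcases k with _ | k
  · simp [hp]
  obtain hk | rfl := (Nat.succ_le_succ_iff.mp hk).lt_or_eq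
  · simp [coeff_oneAddPoly_succ, hk, show ¬n + 1 ≤ k + 1 by omega]
  · simp [coeff_oneAddPoly_succ]

end TopChar

section CharSum

variable {Fq : Type} [Field Fq] [Fintype Fq] {n : ℕ} (χ : (ModRing Fq (n + 1))ˣ →* ℂˣ)

theorem sum_polyChar_mul_topChar {y : Fq[X]} (hy : y.coeff 0 = 1) :
    ∑ b : Fin n → Fq,
        polyChar χ (oneAddPoly n b) * topChar χ (-(oneAddPoly n b * y).coeff (n + 1)) =
      (polyChar χ y)⁻¹ * charSum χ n := by
  have hterm (b : Fin n → Fq) :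
      polyChar χ (oneAddPoly n b) * topChar χ (-(oneAddPoly n b * y).coeff (n + 1)) =
        (polyChar χ y)⁻¹ *
          polyChar χ (oneAddPoly n fun j => (oneAddPoly n b * y).coeff (j + 1)) := by
    set c := (oneAddPoly n b * y).coeff (n + 1)
    have h := polyChar_eq_mul_topChar χ (p := oneAddPoly n b * y) (by simp [mul_coeff_zero, hy])
    rw [polyChar_mul] at h
    calc polyChar χ (oneAddPoly n b) * topChar χ (-c)
        = (polyChar χ y)⁻¹ * (polyChar χ (oneAddPoly n b) * polyChar χ y) * topChar χ (-c) := by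
          field_simp [polyChar_ne_zero χ hy]
      _ = (polyChar χ y)⁻¹ *
            polyChar χ (oneAddPoly n fun j => (oneAddPoly n b * y).coeff (j + 1)) *
              (topChar χ c * topChar χ (-c)) := by
          rw [h]
          ring
      _ = _ := by rw [← AddChar.map_add_eq_mul, add_neg_cancel, AddChar.map_zero_eq_one, mul_one]
  rw [Finset.sum_congr rfl fun b _ => hterm b, ← Finset.mul_sum, charSum,
    (bijective_coeff_oneAddPoly_mul n (by simp [hy])).sum_comp
      fun c => polyChar χ (oneAddPoly n c)]

theorem charSum_mul_charSum_conjChar (hχ : topChar χ ≠ 1) {e : ℕ} (he : e ≤ n) :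
    charSum χ n * charSum (conjChar χ) e = (Fintype.card Fq : ℂ) ^ e * charSum χ (n - e) := by
  classical
  obtain ⟨d, rfl⟩ := Nat.exists_eq_add_of_le' he
  rw [Nat.add_sub_cancel]
  calc charSum χ (d + e) * charSum (conjChar χ) e
      = ∑ b : Fin (d + e) → Fq, polyChar χ (oneAddPoly (d + e) b) *
          ∑ w : Fin e → Fq,
            topChar χ (∑ j, w j * -(oneAddPoly (d + e) b).coeff (d + e - j)) := by
        have hconj : charSum (conjChar χ) e = ∑ w, (polyChar χ (oneAddPoly e w))⁻¹ := by
          simp only [charSum, polyChar_conjChar]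
        simp_rw [hconj, Finset.mul_sum, mul_comm (charSum χ (d + e)),
          ← sum_polyChar_mul_topChar χ (coeff_oneAddPoly_zero e _),
          coeff_oneAddPoly_mul_oneAddPoly (show e ≤ d + e + 1 by omega), mul_neg,
          Finset.sum_neg_distrib]
        exact Finset.sum_comm
    _ = ∑ b : Fin (d + e) → Fq, polyChar χ (oneAddPoly (d + e) b) *
          if (fun j : Fin e => -(oneAddPoly (d + e) b).coeff (d + e - j)) = 0 then
            (Fintype.card Fq : ℂ) ^ e else 0 := by
        simp_rw [AddChar.sum_apply_sum_mul hχ, Fintype.card_fin]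
    _ = charSum χ d * (Fintype.card Fq : ℂ) ^ e := by
        rw [← (Fin.appendEquiv d e).sum_comp, Fintype.sum_prod_type]
        have hrev (c : Fin e → Fq) : (fun j : Fin e => -c j.rev) = 0 ↔ c = 0 := by
          refine ⟨fun h => funext fun j => ?_, fun h => by subst h; ext; simp⟩
          simpa using congrFun h j.rev
        simp only [Fin.appendEquiv, Equiv.coe_fn_mk, coeff_oneAddPoly_append, hrev, mul_ite,
          mul_zero, Fintype.sum_ite_eq', oneAddPoly_append_zero, charSum, Finset.sum_mul]
    _ = (Fintype.card Fq : ℂ) ^ e * charSum χ d := mul_comm _ _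

end CharSum

theorem stmt_10_general (Fq : Type) [Field Fq] [Fintype Fq] (m : ℕ)
    (χ : (ModRing Fq m)ˣ →* ℂˣ) (hχ : IsPrimitiveEven Fq m χ) (s : ℂ) :
    Lpsi m χ s =
      epsPsi m χ * (Fintype.card Fq : ℂ) ^ (((m : ℂ) - 1) * (1 / 2 - s)) *
        Lpsi m (conjChar χ) (1 - s) := by
  cases m with
  | zero => simp [Lpsi]
  | succ n =>
    simp only [Lpsi, epsPsi, psiCoeff_eq_charSum, Nat.add_sub_cancel, Nat.cast_add_one,
      add_sub_cancel_right, Finset.mul_sum]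
    rw [← Finset.sum_range_reflect, Nat.add_sub_cancel]
    refine Finset.sum_congr rfl fun e he => ?_
    have he : e ≤ n := Nat.lt_succ_iff.mp (Finset.mem_range.mp he)
    set q : ℂ := (Fintype.card Fq : ℂ)
    have hq : q ≠ 0 := Nat.cast_ne_zero.mpr Fintype.card_ne_zero
    calc charSum χ (n - e) * q ^ (-((n - e : ℕ) : ℂ) * s)
        = q ^ e * charSum χ (n - e) *
            (q ^ (-((n : ℂ) / 2)) * q ^ ((n : ℂ) * (1 / 2 - s)) * q ^ (-(e : ℂ) * (1 - s))) := by
          rw [← Complex.cpow_natCast, ← Complex.cpow_add _ _ hq, ← Complex.cpow_add _ _ hq,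
            mul_comm (q ^ _), mul_assoc, ← Complex.cpow_add _ _ hq]
          congr 2
          push_cast [Nat.cast_sub he]
          ring
      _ = _ := by
          rw [← charSum_mul_charSum_conjChar χ (topChar_ne_one χ hχ) he]
          ring

theorem stmt_10 (Fq : Type) [Field Fq] [Fintype Fq] (m : ℕ) (hm : 1 ≤ m)
    (χ : (ModRing Fq m)ˣ →* ℂˣ) (hχ : IsPrimitiveEven Fq m χ) (s : ℂ) :
    Lpsi m χ s =
      epsPsi m χ * (Fintype.card Fq : ℂ) ^ (((m : ℂ) - 1) * (1 / 2 - s)) *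
        Lpsi m (conjChar χ) (1 - s) :=
  stmt_10_general Fq m χ hχ s
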